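/- Define K(I₁,R₁,I₂,R₂) = x₁f(I₁*,I₁) + 2y₁f(2R₁*, R₁+R₁*) + x₂f(I₂*,I₂) + 2y₂f(2R₂*, R₂+R₂*) with the parameters x₁ = (ϱ₁+ϱ₂)/(ϱ₂λ₁*n), y₁ = ϱ₂/(ϱ₁λ₂*n), x₂ = (ϱ₁+ϱ₂)/(ϱ₁λ₂*n), y₂ = ϱ₁/(ϱ₂λ₁*n). Then the derivative of K along trajectories of the mean-field IRIR system equals −(1/n)·( δ₁²/(R₁ + ϱ₂/λ₂*)·(I₁ + (ϱ₂/ϱ₁)I₂) + δ₂²/(R₂ + ϱ₁/λ₁*)·(I₂ + (ϱ₁/ϱ₂)I₁) + (δ₁+δ₂)² ), where δᵢ = Rᵢ − Rᵢ*, and hence is nonpositive for positive states. -/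

import Mathlib

noncomputable def f (xs x : ℝ) : ℝ := xs * (x / xs - Real.log (x / xs) - 1)

/-- The shifted Lyapunov function `K`. -/
noncomputable def K (x1 y1 x2 y2 I1s R1s I2s R2s I1 R1 I2 R2 : ℝ) : ℝ :=
  x1 * f I1s I1 + 2 * y1 * f (2 * R1s) (R1 + R1s) +
    x2 * f I2s I2 + 2 * y2 * f (2 * R2s) (R2 + R2s)

/-! Since `∂ₓ f(x*, x) = 1 - x*/x`, the infected terms of `K` contribute
`λᵢ xᵢ (Iᵢ - Iᵢ*)(Rⱼ - Rⱼ*)` along the flow, and the recovered terms, whose factor is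
`(Rᵢ - Rᵢ*)/(Rᵢ + Rᵢ*)`, split into a mixed term `(δᵢ/n)(Iᵢ - (ϱⱼ/ϱᵢ) Iⱼ)` and the quadratic term
`-(δᵢ²/n)/(Rᵢ + Rᵢ*) · (Iᵢ + (ϱⱼ/ϱᵢ) Iⱼ)`. Because `n - R₁* - R₂* = I₁ + I₂ + δ₁ + δ₂`, the mixed
and infected terms together collapse to `-(δ₁ + δ₂)²/n`. -/

lemma hasDerivAt_f {xs x : ℝ} (hxs : xs ≠ 0) (hx : x ≠ 0) :
    HasDerivAt (f xs) (1 - xs / x) x := by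
  have hdiv : HasDerivAt (fun z : ℝ => z / xs) (1 / xs) x := by
    simpa using (hasDerivAt_id x).div_const xs
  exact (((hdiv.sub (hdiv.log (div_ne_zero hx hxs))).sub_const 1).const_mul xs).congr_deriv
    (by field_simp)

lemma hasDerivAt_f_add_const {xs a x : ℝ} (hxs : xs ≠ 0) (hx : x + a ≠ 0) :
    HasDerivAt (fun z => f xs (z + a)) (1 - xs / (x + a)) x := by
  exact ((hasDerivAt_f hxs hx).comp x ((hasDerivAt_id x).add_const a)).congr_deriv (mul_one _)

section PartialDerivatives

variable {x1 y1 x2 y2 I1s R1s I2s R2s I1 R1 I2 R2 : ℝ}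

lemma deriv_K_I1 (hI1s : I1s ≠ 0) (hI1 : I1 ≠ 0) :
    deriv (fun z => K x1 y1 x2 y2 I1s R1s I2s R2s z R1 I2 R2) I1 = x1 * (1 - I1s / I1) := by
  unfold K
  exact (((((hasDerivAt_f hI1s hI1).const_mul x1).add_const _).add_const _).add_const _).deriv

lemma deriv_K_R1 (hR1s : 2 * R1s ≠ 0) (hR1 : R1 + R1s ≠ 0) :
    deriv (fun z => K x1 y1 x2 y2 I1s R1s I2s R2s I1 z I2 R2) R1 =
      2 * y1 * (1 - 2 * R1s / (R1 + R1s)) := by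
  unfold K
  exact (((((hasDerivAt_f_add_const hR1s hR1).const_mul _).const_add _).add_const _).add_const
    _).deriv

lemma deriv_K_I2 (hI2s : I2s ≠ 0) (hI2 : I2 ≠ 0) :
    deriv (fun z => K x1 y1 x2 y2 I1s R1s I2s R2s I1 R1 z R2) I2 = x2 * (1 - I2s / I2) := by
  unfold K
  exact ((((hasDerivAt_f hI2s hI2).const_mul x2).const_add _).add_const _).deriv

lemma deriv_K_R2 (hR2s : 2 * R2s ≠ 0) (hR2 : R2 + R2s ≠ 0) :
    deriv (fun z => K x1 y1 x2 y2 I1s R1s I2s R2s I1 R1 I2 z) R2 =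
      2 * y2 * (1 - 2 * R2s / (R2 + R2s)) := by
  unfold K
  exact (((hasDerivAt_f_add_const hR2s hR2).const_mul _).const_add _).deriv

end PartialDerivatives

section RateIdentity

variable {lam rho rho' a n I J R Rs : ℝ}

lemma infected_term_eq {x Is : ℝ} (hlam : lam ≠ 0) (hI : I ≠ 0)
    (hx : x = a / (rho' * lam * n)) (hRs : Rs = rho / lam) :
    x * (1 - Is / I) * (lam * I * R - rho * I) = a / (rho' * n) * (I - Is) * (R - Rs) := by
  subst hx hRs
  field_simp

lemma recovered_term_eq {y : ℝ} (hlam : lam ≠ 0) (hrho : rho ≠ 0) (hR : R + Rs ≠ 0)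
    (hy : y = rho' / (rho * lam * n)) (hRs : Rs = rho' / lam) :
    2 * y * (1 - 2 * Rs / (R + Rs)) * (rho * I - lam * J * R) =
      1 / n * ((R - Rs) * (I - rho' / rho * J) -
        (R - Rs) ^ 2 / (R + Rs) * (I + rho' / rho * J)) := by
  obtain rfl : rho' = Rs * lam := by rw [hRs]; field_simp
  subst hy
  field_simp
  ring

end RateIdentity

lemma cross_terms_eq {rho1 rho2 n I1 R1 I2 R2 I1s R1s I2s R2s : ℝ} (hrho1 : rho1 ≠ 0)
    (hrho2 : rho2 ≠ 0) (hrho : rho1 + rho2 ≠ 0) (hn : n ≠ 0)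
    (hI1s : I1s = (n - R1s - R2s) * (rho2 / (rho1 + rho2)))
    (hI2s : I2s = (n - R1s - R2s) * (rho1 / (rho1 + rho2)))
    (hsum : I1 + I2 + R1 + R2 = n) :
    (rho1 + rho2) / (rho2 * n) * (I1 - I1s) * (R2 - R2s) +
        (rho1 + rho2) / (rho1 * n) * (I2 - I2s) * (R1 - R1s) +
        1 / n * ((R1 - R1s) * (I1 - rho2 / rho1 * I2)) +
        1 / n * ((R2 - R2s) * (I2 - rho1 / rho2 * I1)) =
      -(1 / n) * ((R1 - R1s) + (R2 - R2s)) ^ 2 := by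
  subst hI1s hI2s hsum
  field_simp
  ring

theorem stmt_7 (lam1 lam2 rho1 rho2 n : ℝ)
    (hlam1 : 0 < lam1) (hlam2 : 0 < lam2) (hrho1 : 0 < rho1) (hrho2 : 0 < rho2)
    (hn : 0 < n)
    (I1s R1s I2s R2s x1 y1 x2 y2 : ℝ)
    (hR1s : R1s = rho2 / lam2) (hR2s : R2s = rho1 / lam1)
    (hI1s : I1s = (n - R1s - R2s) * (rho2 / (rho1 + rho2)))
    (hI2s : I2s = (n - R1s - R2s) * (rho1 / (rho1 + rho2)))
    (hthr : R1s + R2s < n)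
    (hx1 : x1 = (rho1 + rho2) / (rho2 * lam1 * n))
    (hy1 : y1 = rho2 / (rho1 * lam2 * n))
    (hx2 : x2 = (rho1 + rho2) / (rho1 * lam2 * n))
    (hy2 : y2 = rho1 / (rho2 * lam1 * n))
    (I1 R1 I2 R2 : ℝ)
    (hI1 : 0 < I1) (hR1 : 0 < R1) (hI2 : 0 < I2) (hR2 : 0 < R2)
    (hsum : I1 + I2 + R1 + R2 = n) :
    deriv (fun z => K x1 y1 x2 y2 I1s R1s I2s R2s z R1 I2 R2) I1 *
        (lam1 * I1 * R2 - rho1 * I1) +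
      deriv (fun z => K x1 y1 x2 y2 I1s R1s I2s R2s I1 z I2 R2) R1 *
        (rho1 * I1 - lam2 * I2 * R1) +
      deriv (fun z => K x1 y1 x2 y2 I1s R1s I2s R2s I1 R1 z R2) I2 *
        (lam2 * I2 * R1 - rho2 * I2) +
      deriv (fun z => K x1 y1 x2 y2 I1s R1s I2s R2s I1 R1 I2 z) R2 *
        (rho2 * I2 - lam1 * I1 * R2) =
      -(1 / n) * ((R1 - R1s) ^ 2 / (R1 + rho2 / lam2) * (I1 + (rho2 / rho1) * I2) +
        (R2 - R2s) ^ 2 / (R2 + rho1 / lam1) * (I2 + (rho1 / rho2) * I1) +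
        ((R1 - R1s) + (R2 - R2s)) ^ 2) ∧
    -(1 / n) * ((R1 - R1s) ^ 2 / (R1 + rho2 / lam2) * (I1 + (rho2 / rho1) * I2) +
        (R2 - R2s) ^ 2 / (R2 + rho1 / lam1) * (I2 + (rho1 / rho2) * I1) +
        ((R1 - R1s) + (R2 - R2s)) ^ 2) ≤ 0 := by
  have hR1s' : 0 < R1s := by rw [hR1s]; positivity
  have hR2s' : 0 < R2s := by rw [hR2s]; positivity
  have hI1s' : 0 < I1s := by rw [hI1s]; exact mul_pos (by linarith) (by positivity)
  have hI2s' : 0 < I2s := by rw [hI2s]; exact mul_pos (by linarith) (by positivity)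
  rw [deriv_K_I1 hI1s'.ne' hI1.ne', deriv_K_R1 (by positivity) (by positivity),
    deriv_K_I2 hI2s'.ne' hI2.ne', deriv_K_R2 (by positivity) (by positivity), ← hR1s, ← hR2s]
  refine ⟨?_, ?_⟩
  · rw [infected_term_eq hlam1.ne' hI1.ne' hx1 hR2s,
      recovered_term_eq hlam2.ne' hrho1.ne' (by positivity) hy1 hR1s,
      infected_term_eq hlam2.ne' hI2.ne' hx2 hR1s,
      recovered_term_eq hlam1.ne' hrho2.ne' (by positivity) hy2 hR2s]
    linear_combination cross_terms_eq hrho1.ne' hrho2.ne' (by positivity) hn.ne' hI1s hI2s hsum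
  · rw [neg_mul, neg_nonpos]
    positivity
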